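/- arXiv:1905.05131 — 2 statements merged into one kernel-verified Lean document; each statement's English description precedes it below -/
import Mathlib

section
/- On the plane Σ = {(v,0,w,0)} in the Engel group, every admissible compactly supported vector field V = Σₖ fₖ Xₖ satisfies f₂ ≡ 0 and f₄ ≡ 0; hence every admissible vector field is tangent to Σ. Concretely: if f₂, f₄ ∈ C^∞ compactly supported on Ω ⊆ ℝ² satisfy ∂f₄/∂x₃ + f₂ = 0 and ∂f₄/∂x₁ = 0 (with x₁, x₃ the coordinates on Ω), then f₂ = f₄ = 0. -/
/-- On the plane `Σ = {(v,0,w,0)}` of degree `3` in the Engel group, every admissible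
compactly supported vector field `V = Σₖ fₖ Xₖ` has `f₂ ≡ 0` and `f₄ ≡ 0`, hence is
tangent to `Σ`.  Concretely: if `f₂, f₄` are smooth, compactly supported in the open set
`Ω ⊆ ℝ²` (coordinates `(x₁, x₃)`), and satisfy the admissibility system
`∂f₄/∂x₃ + f₂ = 0` and `∂f₄/∂x₁ = 0` on `Ω`, then `f₂ = f₄ = 0`. -/
theorem isolated_plane_admissible_fields_vanish (Ω : Set (ℝ × ℝ)) (hΩ : IsOpen Ω)
    (f₂ f₄ : ℝ × ℝ → ℝ) (hf₂ : ContDiff ℝ (⊤ : ℕ∞) f₂) (hf₄ : ContDiff ℝ (⊤ : ℕ∞) f₄)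
    (hc₂ : HasCompactSupport f₂) (hc₄ : HasCompactSupport f₄)
    (hs₂ : tsupport f₂ ⊆ Ω) (hs₄ : tsupport f₄ ⊆ Ω)
    (heq₁ : ∀ x ∈ Ω, fderiv ℝ f₄ x (0, 1) + f₂ x = 0)
    (heq₂ : ∀ x ∈ Ω, fderiv ℝ f₄ x (1, 0) = 0) :
    (∀ x, f₂ x = 0) ∧ ∀ x, f₄ x = 0 := by
  have hd₄ : Differentiable ℝ f₄ := hf₄.differentiable (by simp)
  -- ∂₁ f₄ = 0 everywhere
  have hder : ∀ x : ℝ × ℝ, fderiv ℝ f₄ x (1, 0) = 0 := by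
    intro x
    by_cases hx : x ∈ Ω
    · exact heq₂ x hx
    · have : x ∉ tsupport f₄ := fun h => hx (hs₄ h)
      have h0 : fderiv ℝ f₄ x = 0 := by
        by_contra h
        exact this (support_fderiv_subset ℝ (Function.mem_support.mpr h))
      simp [h0]
  -- f₄ = 0
  have hf₄0 : ∀ x, f₄ x = 0 := by
    intro x
    obtain ⟨r, hr⟩ := hc₄.isBounded.subset_closedBall 0
    -- g t = f₄ (t, x.2) is constant
    have hg : ∀ t : ℝ, f₄ (t, x.2) = f₄ (r + 1, x.2) := by
      have hdg : ∀ t : ℝ, HasDerivAt (fun t : ℝ => f₄ (t, x.2)) 0 t := by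
        intro t
        have h1 : HasFDerivAt (fun t : ℝ => (t, x.2))
            ((ContinuousLinearMap.inl ℝ ℝ ℝ)) t := by
          have := (HasFDerivAt.prodMk (hasFDerivAt_id t) (hasFDerivAt_const (𝕜 := ℝ) x.2 t))
          exact this
        have h2 := (hd₄ (t, x.2)).hasFDerivAt.comp t h1
        have := h2.hasDerivAt
        exact (by simpa [hder (t, x.2)] using this : HasDerivAt (f₄ ∘ fun t : ℝ => (t, x.2)) 0 t)
      intro t
      have : ∀ t : ℝ, deriv (fun t : ℝ => f₄ (t, x.2)) t = 0 :=
        fun t => (hdg t).deriv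
      exact is_const_of_deriv_eq_zero (fun t => (hdg t).differentiableAt) this t (r + 1)
    have hout : f₄ (r + 1, x.2) = 0 := by
      apply image_eq_zero_of_notMem_tsupport
      intro h
      have := hr h
      have hle : |r + 1| ≤ r := by
        have := this
        simp only [Metric.mem_closedBall, dist_zero_right, Prod.norm_def] at this
        exact le_trans (le_max_left _ _) (by simpa [Real.norm_eq_abs] using this)
      have : r + 1 ≤ r := le_trans (le_abs_self _) hle
      linarith
    have := hg x.1
    simpa [hout] using this
  have hfun : f₄ = fun _ => 0 := funext hf₄0
  refine ⟨?_, hf₄0⟩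
  intro x
  by_cases hx : x ∈ Ω
  · have := heq₁ x hx
    rw [hfun] at this
    simpa [fderiv_const] using this
  · exact image_eq_zero_of_notMem_tsupport (fun h => hx (hs₂ h))
end

section
/- Rigidity of the plane in the Engel group: if φ, ψ ∈ C¹ have compact support in a bounded open set Ω ⊆ ℝ², ψ is C², and they satisfy the first-order system ψ_w = −w φ_w and ψ_v = −w φ_v on Ω, then φ ≡ 0 and ψ ≡ 0. -/
/-- A differentiable compactly supported function on `ℝ × ℝ` whose derivative in the
first coordinate direction vanishes everywhere is identically zero. -/
lemma eq_zero_of_fderiv_fst_eq_zero (g : ℝ × ℝ → ℝ) (hg : Differentiable ℝ g)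
    (hc : HasCompactSupport g) (h0 : ∀ p, fderiv ℝ g p (1, 0) = 0) :
    ∀ p, g p = 0 := by
  obtain ⟨R, hR⟩ := hc.isCompact.isBounded.subset_closedBall 0
  rintro ⟨v, w⟩
  set h : ℝ → ℝ := fun x => g (x, w) with hh
  have hd : ∀ x : ℝ, HasDerivAt h 0 x := by
    intro x
    have hline : HasDerivAt (fun x : ℝ => (x, w)) ((1 : ℝ), (0 : ℝ)) x :=
      (hasDerivAt_id x).prodMk (hasDerivAt_const x w)
    have := ((hg (x, w)).hasFDerivAt).comp_hasDerivAt x hline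
    simpa [h, h0 (x, w), Function.comp_def] using this
  have hconst : ∀ x y : ℝ, h x = h y :=
    is_const_of_deriv_eq_zero (fun x => (hd x).differentiableAt)
      (fun x => (hd x).deriv)
  have hout : ((|R| + 1, w) : ℝ × ℝ) ∉ tsupport g := by
    intro hmem
    have h2 : ‖((|R| + 1, w) : ℝ × ℝ)‖ ≤ R := by
      simpa [dist_eq_norm] using hR hmem
    have h1 : |R| + 1 ≤ ‖((|R| + 1, w) : ℝ × ℝ)‖ := by
      have := le_max_left ‖(|R| + 1 : ℝ)‖ ‖w‖
      simpa [Prod.norm_def, Real.norm_eq_abs,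
        abs_of_nonneg (by positivity : (0:ℝ) ≤ |R| + 1)] using this
    have := le_abs_self R
    linarith
  have hz : g ((|R| + 1, w) : ℝ × ℝ) = 0 := image_eq_zero_of_notMem_tsupport hout
  calc g (v, w) = h v := rfl
    _ = h (|R| + 1) := hconst v (|R| + 1)
    _ = 0 := hz

/-- Rigidity of the plane `Υ(v,w) = (v,0,w,0)` in the Engel group: if `φ ∈ C¹₀(Ω)` and
`ψ ∈ C²₀(Ω)` are compactly supported in the bounded open set `Ω ⊆ ℝ²` (coordinates
`p = (v,w)`) and satisfy the degree-preservation system `ψ_w = −w φ_w` and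
`ψ_v = −w φ_v` on `Ω`, then `φ ≡ 0` and `ψ ≡ 0`. -/
theorem engel_plane_rigidity (Ω : Set (ℝ × ℝ)) (hΩo : IsOpen Ω)
    (hΩb : Bornology.IsBounded Ω) (φ ψ : ℝ × ℝ → ℝ)
    (hφ : ContDiff ℝ 1 φ) (hψ : ContDiff ℝ 2 ψ)
    (hφc : HasCompactSupport φ) (hψc : HasCompactSupport ψ)
    (hφs : tsupport φ ⊆ Ω) (hψs : tsupport ψ ⊆ Ω)
    (hw : ∀ p ∈ Ω, fderiv ℝ ψ p (0, 1) = -p.2 * fderiv ℝ φ p (0, 1))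
    (hv : ∀ p ∈ Ω, fderiv ℝ ψ p (1, 0) = -p.2 * fderiv ℝ φ p (1, 0)) :
    (∀ p, φ p = 0) ∧ ∀ p, ψ p = 0 := by
  have hφd : Differentiable ℝ φ := hφ.differentiable one_ne_zero
  have hψd : Differentiable ℝ ψ := hψ.differentiable two_ne_zero
  set F : ℝ × ℝ → ℝ := fun q => ψ q + q.2 * φ q with hF
  have hFder : ∀ p : ℝ × ℝ, HasFDerivAt F
      (fderiv ℝ ψ p + (p.2 • fderiv ℝ φ p + φ p • ContinuousLinearMap.snd ℝ ℝ ℝ)) p := by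
    intro p
    exact (hψd p).hasFDerivAt.add ((hasFDerivAt_snd).mul (hφd p).hasFDerivAt)
  have hFd : Differentiable ℝ F := fun p => (hFder p).differentiableAt
  have hFsupp : tsupport F ⊆ Ω := by
    have hsub : Function.support F ⊆ tsupport ψ ∪ tsupport φ := by
      intro p hp
      by_contra hcon
      simp only [Set.mem_union, not_or] at hcon
      have h1 : ψ p = 0 := image_eq_zero_of_notMem_tsupport hcon.1
      have h2 : φ p = 0 := image_eq_zero_of_notMem_tsupport hcon.2
      simp [F, h1, h2] at hp
    have hcl : IsClosed (tsupport ψ ∪ tsupport φ) :=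
      (isClosed_tsupport ψ).union (isClosed_tsupport φ)
    exact (closure_minimal hsub hcl).trans (Set.union_subset hψs hφs)
  have hFc : HasCompactSupport F :=
    Metric.isCompact_of_isClosed_isBounded (isClosed_tsupport F) (hΩb.subset hFsupp)
  have hF0 : ∀ p, fderiv ℝ F p (1, 0) = 0 := by
    intro p
    by_cases hp : p ∈ Ω
    · rw [(hFder p).fderiv]
      simp only [ContinuousLinearMap.add_apply, ContinuousLinearMap.smul_apply,
        ContinuousLinearMap.coe_snd', smul_eq_mul, hv p hp]
      ring
    · have hnot : p ∉ tsupport F := fun h => hp (hFsupp h)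
      have heq : F =ᶠ[nhds p] 0 := by
        filter_upwards [(isClosed_tsupport F).isOpen_compl.mem_nhds hnot] with q hq
        exact image_eq_zero_of_notMem_tsupport hq
      have hzz : fderiv ℝ (0 : ℝ × ℝ → ℝ) p = 0 := fderiv_const_apply 0
      rw [heq.fderiv_eq, hzz]
      rfl
  have hFzero : ∀ p, F p = 0 := eq_zero_of_fderiv_fst_eq_zero F hFd hFc hF0
  have hφ0 : ∀ p, φ p = 0 := by
    intro p
    by_cases hp : p ∈ Ω
    · have hFfun : F = fun _ => (0 : ℝ) := funext hFzero
      have hz : fderiv ℝ F p (0, 1) = 0 := by rw [hFfun, fderiv_fun_const]; rfl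
      rw [(hFder p).fderiv] at hz
      simp only [ContinuousLinearMap.add_apply, ContinuousLinearMap.smul_apply,
        ContinuousLinearMap.coe_snd', smul_eq_mul, hw p hp] at hz
      linarith
    · exact image_eq_zero_of_notMem_tsupport (fun h => hp (hφs h))
  have hφfun : φ = fun _ => (0 : ℝ) := funext hφ0
  have hψ0 : ∀ p, ψ p = 0 := by
    apply eq_zero_of_fderiv_fst_eq_zero ψ hψd hψc
    intro p
    by_cases hp : p ∈ Ω
    · rw [hv p hp, hφfun]
      simp
    · have hnot : p ∉ tsupport ψ := fun h => hp (hψs h)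
      have heq : ψ =ᶠ[nhds p] 0 := by
        filter_upwards [(isClosed_tsupport ψ).isOpen_compl.mem_nhds hnot] with q hq
        exact image_eq_zero_of_notMem_tsupport hq
      have hzz : fderiv ℝ (0 : ℝ × ℝ → ℝ) p = 0 := fderiv_const_apply 0
      rw [heq.fderiv_eq, hzz]
      rfl
  exact ⟨hφ0, hψ0⟩
end
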